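/- Let M be a real n×n matrix with M + Mᵀ positive definite. Then for any positive diagonal matrix D, every eigenvalue of MD has positive real part. -/

import Mathlib

/-!
If `(A * D) v = μ v` with `D` positive definite, put `w = D v`. Then
`w* A w = μ (v* D v)` with `v* D v > 0` real, while `2 Re (w* A w) = w* (A + Aᴴ) w > 0`;
hence `Re μ > 0`. The real matrices of the theorem are handled through their complexifications,
which stay positive definite since `z* A z = aᵀ A a + bᵀ A b` for `z = a + i b`.
-/

open Matrix
open scoped ComplexOrder

namespace Matrix

variable {n : Type*} [Fintype n] {𝕜 : Type*} [RCLike 𝕜]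

lemma re_star_dotProduct_map_ofReal_mulVec (A : Matrix n n ℝ) (x : n → 𝕜) :
    RCLike.re (star x ⬝ᵥ A.map ((↑) : ℝ → 𝕜) *ᵥ x) =
      (fun i ↦ RCLike.re (x i)) ⬝ᵥ A *ᵥ (fun i ↦ RCLike.re (x i)) +
        (fun i ↦ RCLike.im (x i)) ⬝ᵥ A *ᵥ (fun i ↦ RCLike.im (x i)) := by
  simp only [dotProduct, mulVec, map_apply, Pi.star_apply, Finset.mul_sum, map_sum,
    ← Finset.sum_add_distrib, RCLike.star_def, RCLike.mul_re, RCLike.conj_re, RCLike.conj_im,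
    RCLike.ofReal_re, RCLike.ofReal_im, RCLike.mul_im]
  refine Finset.sum_congr rfl fun i _ ↦ Finset.sum_congr rfl fun j _ ↦ ?_
  ring

omit [Fintype n] in
lemma IsHermitian.map_ofReal {A : Matrix n n ℝ} (hA : A.IsHermitian) :
    (A.map ((↑) : ℝ → 𝕜)).IsHermitian := by
  rw [IsHermitian, ← conjTranspose_map _ fun x ↦ (RCLike.conj_ofReal x).symm, hA]

theorem PosDef.map_ofReal {A : Matrix n n ℝ} (hA : A.PosDef) :
    (A.map ((↑) : ℝ → 𝕜)).PosDef := by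
  have hH := hA.isHermitian.map_ofReal (𝕜 := 𝕜)
  refine .of_dotProduct_mulVec_pos hH fun x hx ↦ RCLike.pos_iff.mpr ⟨?_, ?_⟩
  · have hre_or_im : (fun i ↦ RCLike.re (x i)) ≠ 0 ∨ (fun i ↦ RCLike.im (x i)) ≠ 0 := by
      contrapose! hx
      exact funext fun i ↦
        RCLike.ext (by simpa using congrFun hx.1 i) (by simpa using congrFun hx.2 i)
    rw [re_star_dotProduct_map_ofReal_mulVec]
    rcases hre_or_im with h | h
    · exact add_pos_of_pos_of_nonneg (by simpa using hA.dotProduct_mulVec_pos h)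
        (by simpa using hA.posSemidef.dotProduct_mulVec_nonneg _)
    · exact add_pos_of_nonneg_of_pos (by simpa using hA.posSemidef.dotProduct_mulVec_nonneg _)
        (by simpa using hA.dotProduct_mulVec_pos h)
  · exact hH.im_star_dotProduct_mulVec_self x

lemma re_star_dotProduct_add_conjTranspose_mulVec (A : Matrix n n 𝕜) (x : n → 𝕜) :
    RCLike.re (star x ⬝ᵥ (A + Aᴴ) *ᵥ x) = 2 * RCLike.re (star x ⬝ᵥ A *ᵥ x) := by
  have : star x ⬝ᵥ Aᴴ *ᵥ x = star (star x ⬝ᵥ A *ᵥ x) := by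
    rw [mulVec_conjTranspose, star_dotProduct_star, dotProduct_mulVec]
  rw [add_mulVec, dotProduct_add, this, map_add, RCLike.star_def, RCLike.conj_re]
  ring

theorem re_pos_of_mul_posDef_mulVec_eq_smul {A D : Matrix n n 𝕜} (hA : (A + Aᴴ).PosDef)
    (hD : D.PosDef) {μ : 𝕜} {v : n → 𝕜} (hv : v ≠ 0) (hμ : (A * D) *ᵥ v = μ • v) :
    0 < RCLike.re μ := by
  set w := D *ᵥ v
  have hvDv := hD.dotProduct_mulVec_pos hv
  obtain ⟨r, hr, hr_eq⟩ := RCLike.pos_iff_exists_ofReal.mp hvDv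
  have hw : w ≠ 0 := by
    rintro hw
    simp [w, hw] at hvDv
  have hwv : star w ⬝ᵥ v = star v ⬝ᵥ w := by
    rw [star_mulVec, ← dotProduct_mulVec, hD.isHermitian.eq]
  have hwAw : star w ⬝ᵥ A *ᵥ w = μ * r := by
    rw [mulVec_mulVec, hμ, dotProduct_smul, hwv, hr_eq, smul_eq_mul]
  have hre : 0 < RCLike.re (star w ⬝ᵥ A *ᵥ w) := by
    have hpos := (RCLike.pos_iff.mp (hA.dotProduct_mulVec_pos hw)).1
    rw [re_star_dotProduct_add_conjTranspose_mulVec] at hpos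
    linarith
  rw [hwAw, RCLike.re_mul_ofReal] at hre
  exact pos_of_mul_pos_left hre hr.le

end Matrix

theorem stmt5 {n : ℕ} (M : Matrix (Fin n) (Fin n) ℝ)
    (hM : (M + Mᵀ).PosDef)
    (d : Fin n → ℝ) (hd : ∀ i, 0 < d i)
    (μ : ℂ) (v : Fin n → ℂ) (hv : v ≠ 0)
    (heig : ((M * diagonal d).map (fun x : ℝ => (x : ℂ))).mulVec v = μ • v) :
    0 < μ.re := by
  set Mc := M.map ((↑) : ℝ → ℂ)
  have hMc : (Mc + Mcᴴ).PosDef := by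
    have hsum : (M + Mᵀ).map ((↑) : ℝ → ℂ) = Mc + Mcᴴ := by
      ext i j
      simp [Mc]
    exact hsum ▸ hM.map_ofReal
  have hD : (diagonal fun i ↦ (d i : ℂ)).PosDef :=
    posDef_diagonal_iff.mpr fun i ↦ mod_cast hd i
  refine re_pos_of_mul_posDef_mulVec_eq_smul hMc hD hv ?_
  convert heig using 2
  ext i j
  simp [Mc]
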